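/- arXiv:2604.13410 — 3 statements merged into one kernel-verified Lean document; each statement's English description precedes it below -/
import Mathlib

section
/- Let Σ be a positive semidefinite self-adjoint operator with eigenvalues ρ_j ≤ C·exp(−c·j) for constants C, c > 0. Then the effective dimension Γ(λ) = Σ_j ρ_j/(ρ_j+λ) satisfies Γ(λ) ≤ C'·(1 + log(1/λ)) for all λ ∈ (0,1), for some constant C' depending only on C and c. -/
/-- `ρ j` stands for the `(j+1)`-th eigenvalue of the trace-class PSD operator `Σ`. -/
theorem stmt5 (ρ : ℕ → ℝ) (C c : ℝ) (hC : 0 < C) (hc : 0 < c)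
    (hρ0 : ∀ j, 0 ≤ ρ j) (hmono : ∀ j, ρ (j + 1) ≤ ρ j)
    (hdecay : ∀ j : ℕ, ρ j ≤ C * Real.exp (-(c * ((j : ℝ) + 1)))) :
    ∃ C' > (0 : ℝ), ∀ lam : ℝ, 0 < lam → lam < 1 →
      ∑' j : ℕ, ρ j / (ρ j + lam) ≤ C' * (1 + Real.log (1 / lam)) := by
  set r := Real.exp (-c) with hrdef
  have hr0 : 0 < r := Real.exp_pos _
  have hr1 : r < 1 := by
    rw [hrdef]; exact Real.exp_lt_one_iff.mpr (by linarith)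
  have h1r : 0 < 1 - r := by linarith
  have hrpow : ∀ j : ℕ, C * Real.exp (-(c * ((j : ℝ) + 1))) = C * r ^ (j + 1) := by
    intro j
    rw [hrdef, ← Real.exp_nat_mul]
    push_cast
    ring_nf
  refine ⟨1/c + 1 + C/(1-r), by positivity, ?_⟩
  intro lam hl0 hl1
  have hlog : 0 < Real.log (1/lam) := Real.log_pos (by rw [lt_div_iff₀ hl0]; linarith)
  set L := Real.log (1/lam) with hL
  set N := Nat.ceil (L / c) with hN
  have hNge : L / c ≤ (N : ℝ) := Nat.le_ceil _
  have hNle : (N : ℝ) ≤ L / c + 1 := (Nat.ceil_lt_add_one (by positivity)).le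
  have hexpN : r ^ N ≤ lam := by
    have h1 : L ≤ c * N := by
      rw [div_le_iff₀ hc] at hNge; linarith [hNge]
    have : r ^ N = Real.exp (-(c * N)) := by
      rw [hrdef, ← Real.exp_nat_mul]; ring_nf
    rw [this]
    have hlog2 : -(c * N) ≤ Real.log lam := by
      have : L = - Real.log lam := by rw [hL, one_div, Real.log_inv]
      linarith
    calc Real.exp (-(c * N)) ≤ Real.exp (Real.log lam) := Real.exp_le_exp.mpr hlog2
      _ = lam := Real.exp_log hl0
  set f : ℕ → ℝ := fun j => ρ j / (ρ j + lam) with hf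
  have hden : ∀ j, 0 < ρ j + lam := fun j => by have := hρ0 j; linarith
  have hf0 : ∀ j, 0 ≤ f j := fun j => div_nonneg (hρ0 j) (hden j).le
  have hf1 : ∀ j, f j ≤ 1 := fun j => by
    rw [hf]; exact div_le_one_of_le₀ (by linarith [hρ0 j]) (hden j).le
  have hfle : ∀ j, f j ≤ ρ j / lam := by
    intro j
    apply div_le_div_of_nonneg_left (hρ0 j) hl0
    linarith [hρ0 j]
  have hρle : ∀ j, ρ j ≤ C * r ^ (j + 1) := fun j => (hdecay j).trans_eq (hrpow j)
  have hg : Summable (fun j : ℕ => (C / lam) * r ^ j) :=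
    (summable_geometric_of_lt_one hr0.le hr1).mul_left _
  have hle : ∀ j : ℕ, f j ≤ (C / lam) * r ^ j := by
    intro j
    refine (hfle j).trans ?_
    rw [div_le_iff₀ hl0, mul_comm ((C/lam) * r ^ j) lam, ← mul_assoc,
      mul_div_cancel₀ _ hl0.ne']
    calc ρ j ≤ C * r ^ (j+1) := hρle j
      _ ≤ C * r ^ j := by
          apply mul_le_mul_of_nonneg_left _ hC.le
          exact pow_le_pow_of_le_one hr0.le hr1.le (by omega)
  have hsum : Summable f := Summable.of_nonneg_of_le hf0 hle hg
  have hsplit := (Summable.sum_add_tsum_nat_add N hsum).symm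
  rw [hsplit]
  have hhead : ∑ i ∈ Finset.range N, f i ≤ (N : ℝ) := by
    calc ∑ i ∈ Finset.range N, f i ≤ ∑ i ∈ Finset.range N, (1:ℝ) :=
          Finset.sum_le_sum fun i _ => hf1 i
      _ = N := by simp
  have htailterm : ∀ i : ℕ, f (i + N) ≤ C * r ^ i := by
    intro i
    refine (hfle (i + N)).trans ?_
    rw [div_le_iff₀ hl0]
    calc ρ (i + N) ≤ C * r ^ (i + N + 1) := hρle (i + N)
      _ = C * r ^ (i + 1) * r ^ N := by ring
      _ ≤ C * r ^ i * lam := by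
          apply mul_le_mul _ hexpN (pow_nonneg hr0.le _) (by positivity)
          apply mul_le_mul_of_nonneg_left _ hC.le
          exact pow_le_pow_of_le_one hr0.le hr1.le (by omega)
      _ = C * r ^ i * lam := rfl
  have htail : ∑' i, f (i + N) ≤ C / (1 - r) := by
    have hsg : Summable (fun i : ℕ => C * r ^ i) :=
      (summable_geometric_of_lt_one hr0.le hr1).mul_left _
    calc ∑' i, f (i + N) ≤ ∑' i, C * r ^ i :=
          Summable.tsum_le_tsum htailterm ((hsum.comp_injective (add_left_injective N))) hsg
      _ = C * (1 - r)⁻¹ := by rw [tsum_mul_left, tsum_geometric_of_lt_one hr0.le hr1]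
      _ = C / (1 - r) := by rw [div_eq_mul_inv]
  have hK : 0 ≤ C / (1 - r) := by positivity
  have hNb : (N : ℝ) ≤ L / c + 1 := hNle
  have hLc : L / c ≤ (1/c) * L := by rw [div_eq_inv_mul, one_div]
  calc ∑ i ∈ Finset.range N, f i + ∑' i, f (i + N)
      ≤ (N : ℝ) + C / (1 - r) := add_le_add hhead htail
    _ ≤ L / c + 1 + C / (1 - r) := by linarith
    _ ≤ (1/c + 1 + C/(1-r)) * (1 + L) := by
        have h1c : 0 < 1/c := by positivity
        nlinarith [hlog, hK, h1c]
end

section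
/- Let M be a symmetric PSD matrix, λ' > 0, and set J = (M + λ'I)^{-1}. For any symmetric PSD matrix A, Tr(A J A J) ≤ (‖A‖_op / λ') · Tr(A (M + λ'I)^{-1}). -/
open scoped RealInnerProductSpace

open Matrix in
private lemma psd_smul' {n : Type*} [Fintype n] {P : Matrix n n ℝ} (hP : P.PosSemidef)
    {c : ℝ} (hc : 0 ≤ c) : (c • P).PosSemidef := by
  refine Matrix.PosSemidef.of_dotProduct_mulVec_nonneg ?_ fun x => ?_
  · simpa [Matrix.IsHermitian, Matrix.conjTranspose_smul] using congrArg (c • ·) hP.1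
  · rw [Matrix.smul_mulVec, dotProduct_smul]
    exact mul_nonneg hc (hP.dotProduct_mulVec_nonneg x)

open Matrix in
private lemma psd_trace_nonneg' {n : Type*} [Fintype n] [DecidableEq n] {P : Matrix n n ℝ}
    (hP : P.PosSemidef) : 0 ≤ P.trace := by
  rw [Matrix.trace]
  refine Finset.sum_nonneg fun i _ => ?_
  simpa [dotProduct, Matrix.mulVec, Pi.single_apply, Finset.sum_ite_eq,
    Matrix.diag] using hP.dotProduct_mulVec_nonneg (Pi.single i 1)

open scoped MatrixOrder in
private lemma psd_sqrt_exists' {n : Type*} [Fintype n] [DecidableEq n] {P : Matrix n n ℝ}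
    (hP : P.PosSemidef) : ∃ S : Matrix n n ℝ, S.PosSemidef ∧ S * S = P :=
  ⟨CFC.sqrt P, Matrix.nonneg_iff_posSemidef.mp (CFC.sqrt_nonneg P), CFC.sqrt_mul_sqrt_self P hP.nonneg⟩

open Matrix in
private lemma psd_trace_mul_nonneg' {n : Type*} [Fintype n] [DecidableEq n]
    {P Q : Matrix n n ℝ} (hP : P.PosSemidef) (hQ : Q.PosSemidef) : 0 ≤ (P * Q).trace := by
  obtain ⟨R, hR, hS⟩ := psd_sqrt_exists' hP
  have h1 : (R * Q * R).trace = (P * Q).trace := by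
    rw [Matrix.trace_mul_comm (R * Q) R, ← mul_assoc, hS]
  rw [← h1]
  have := hQ.mul_mul_conjTranspose_same R
  rw [hR.1] at this
  exact psd_trace_nonneg' this

open Matrix in
private lemma psd_trace_mono' {n : Type*} [Fintype n] [DecidableEq n]
    {P X Y : Matrix n n ℝ} (hP : P.PosSemidef) (h : (Y - X).PosSemidef) :
    (P * X).trace ≤ (P * Y).trace := by
  have := psd_trace_mul_nonneg' hP h
  rw [Matrix.mul_sub, Matrix.trace_sub] at this
  linarith

open Matrix in
private lemma opnorm_loewner' {d : ℕ} {A : Matrix (Fin d) (Fin d) ℝ} (hA : A.IsHermitian) :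
    ((‖Matrix.toEuclideanCLM (𝕜 := ℝ) A‖) • (1 : Matrix (Fin d) (Fin d) ℝ) - A).PosSemidef := by
  set a := ‖Matrix.toEuclideanCLM (𝕜 := ℝ) A‖ with ha
  refine Matrix.PosSemidef.of_dotProduct_mulVec_nonneg ?_ fun x => ?_
  · rw [Matrix.IsHermitian, Matrix.conjTranspose_sub, Matrix.conjTranspose_smul,
      Matrix.conjTranspose_one, hA.eq, star_trivial]
  · set T := Matrix.toEuclideanCLM (𝕜 := ℝ) A with hT
    set x' : EuclideanSpace ℝ (Fin d) := (WithLp.equiv 2 _).symm x with hx'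
    have hTx : T x' = (WithLp.equiv 2 _).symm (A *ᵥ x) := rfl
    have h1 : star x ⬝ᵥ (A *ᵥ x) = ⟪x', T x'⟫ := by
      rw [hTx, hx']
      exact (dotProduct_comm _ _).trans (EuclideanSpace.inner_toLp_toLp x (A *ᵥ x)).symm
    have h3 : star x ⬝ᵥ x = ‖x'‖ ^ 2 := by
      have := EuclideanSpace.inner_toLp_toLp (𝕜 := ℝ) x x
      rw [real_inner_self_eq_norm_sq] at this
      rw [dotProduct_comm]
      exact this.symm
    have h2 : ⟪x', T x'⟫ ≤ a * ‖x'‖ ^ 2 := by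
      calc ⟪x', T x'⟫ ≤ ‖x'‖ * ‖T x'‖ := real_inner_le_norm _ _
        _ ≤ ‖x'‖ * (‖T‖ * ‖x'‖) := by
            exact mul_le_mul_of_nonneg_left (T.le_opNorm x') (norm_nonneg _)
        _ = a * ‖x'‖ ^ 2 := by ring
    have : star x ⬝ᵥ ((a • (1 : Matrix (Fin d) (Fin d) ℝ) - A) *ᵥ x)
        = a * (star x ⬝ᵥ x) - star x ⬝ᵥ (A *ᵥ x) := by
      rw [Matrix.sub_mulVec, dotProduct_sub, Matrix.smul_mulVec,
        Matrix.one_mulVec, dotProduct_smul]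
      simp [smul_eq_mul]
    rw [this, h1, h3]
    linarith

theorem stmt10 {d : ℕ} (A M : Matrix (Fin d) (Fin d) ℝ) (lam' : ℝ)
    (hA : A.PosSemidef) (hM : M.PosSemidef) (hlam : 0 < lam') :
    (A * (M + lam' • (1 : Matrix (Fin d) (Fin d) ℝ))⁻¹
        * A * (M + lam' • (1 : Matrix (Fin d) (Fin d) ℝ))⁻¹).trace
      ≤ (‖Matrix.toEuclideanCLM (𝕜 := ℝ) A‖ / lam')
          * (A * (M + lam' • (1 : Matrix (Fin d) (Fin d) ℝ))⁻¹).trace := by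
  set a := ‖Matrix.toEuclideanCLM (𝕜 := ℝ) A‖ with ha
  have ha0 : 0 ≤ a := norm_nonneg _
  set N := M + lam' • (1 : Matrix (Fin d) (Fin d) ℝ) with hN
  have hone : (lam' • (1 : Matrix (Fin d) (Fin d) ℝ)).PosDef := by
    rw [Matrix.smul_one_eq_diagonal]
    exact Matrix.PosDef.diagonal fun i => hlam
  have hNpd : N.PosDef := Matrix.PosDef.posSemidef_add hM hone
  have hJpd : N⁻¹.PosDef := hNpd.inv
  set J := N⁻¹ with hJ
  have hNJ : N * J = 1 := Matrix.mul_nonsing_inv N (Matrix.isUnit_iff_isUnit_det N |>.mp hNpd.isUnit)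
  have hJN : J * N = 1 := Matrix.nonsing_inv_mul N (Matrix.isUnit_iff_isUnit_det N |>.mp hNpd.isUnit)
  clear_value J
  clear_value N
  -- J ≤ lam'⁻¹ • 1
  have hJle : (lam'⁻¹ • (1 : Matrix (Fin d) (Fin d) ℝ) - J).PosSemidef := by
    have e1 : M * M + lam' • M = N * N - lam' • N := by
      rw [hN]
      simp only [Matrix.add_mul, Matrix.mul_add, Matrix.smul_mul, Matrix.mul_smul, mul_one,
        one_mul, smul_add, smul_smul, smul_sub]
      abel
    have hJNNJ : J * (N * N) * J = 1 := by
      rw [show J * (N * N) * J = (J * N) * (N * J) by noncomm_ring, hJN, hNJ, one_mul]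
    have hJNJ : J * N * J = J := by rw [hJN, one_mul]
    have e2 : J * (lam'⁻¹ • (M * M + lam' • M)) * J
        = lam'⁻¹ • (1 : Matrix (Fin d) (Fin d) ℝ) - J := by
      rw [e1]
      calc J * (lam'⁻¹ • (N * N - lam' • N)) * J
          = lam'⁻¹ • (J * (N * N) * J - lam' • (J * N * J)) := by
            simp only [Matrix.mul_sub, Matrix.sub_mul, Matrix.mul_smul, Matrix.smul_mul, smul_sub]
        _ = lam'⁻¹ • ((1 : Matrix (Fin d) (Fin d) ℝ) - lam' • J) := by rw [hJNNJ, hJNJ]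
        _ = lam'⁻¹ • (1 : Matrix (Fin d) (Fin d) ℝ) - J := by
            rw [smul_sub, smul_smul, inv_mul_cancel₀ hlam.ne', one_smul]
    have hMM : (M * M).PosSemidef := by
      have := Matrix.posSemidef_conjTranspose_mul_self M
      rwa [hM.1.eq] at this
    have hP : (lam'⁻¹ • (M * M + lam' • M)).PosSemidef :=
      psd_smul' (hMM.add (psd_smul' hM hlam.le)) (by positivity)
    have := hP.mul_mul_conjTranspose_same J
    rw [hJpd.posSemidef.1] at this
    rwa [e2] at this
  -- square root of J
  obtain ⟨S, hSpsd, hSS⟩ := psd_sqrt_exists' hJpd.posSemidef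
  have hSh : S.conjTranspose = S := hSpsd.1
  set B := S * A * S with hB
  clear_value B
  have hBpsd : B.PosSemidef := by
    have := hA.mul_mul_conjTranspose_same S
    rw [hSh] at this
    rwa [hB]
  -- A ≤ a • 1 hence B ≤ a • J
  have hAle : (a • (1 : Matrix (Fin d) (Fin d) ℝ) - A).PosSemidef := opnorm_loewner' hA.1
  have hBle : (a • J - B).PosSemidef := by
    have := hAle.mul_mul_conjTranspose_same S
    rw [hSh] at this
    have e : S * (a • (1 : Matrix (Fin d) (Fin d) ℝ) - A) * S = a • J - B := by
      rw [Matrix.mul_sub, Matrix.sub_mul, Matrix.mul_smul, Matrix.smul_mul, mul_one, hSS, hB]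
    rwa [e] at this
  -- lam'⁻¹ • J - J*J psd
  have hJJle : (lam'⁻¹ • J - J * J).PosSemidef := by
    have := hJle.mul_mul_conjTranspose_same S
    rw [hSh] at this
    have e : S * (lam'⁻¹ • (1 : Matrix (Fin d) (Fin d) ℝ) - J) * S = lam'⁻¹ • J - J * J := by
      rw [Matrix.mul_sub, Matrix.sub_mul, Matrix.mul_smul, Matrix.smul_mul, mul_one, hSS]
      congr 1
      rw [← hSS]
      noncomm_ring
    rwa [e] at this
  -- trace identities
  have t1 : (A * J * A * J).trace = (B * B).trace := by
    have hBB : B * B = S * (A * J * A) * S := by rw [hB, ← hSS]; noncomm_ring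
    rw [hBB, Matrix.trace_mul_comm (S * (A * J * A)) S, ← mul_assoc, hSS,
      Matrix.trace_mul_comm J (A * J * A)]
  have t2 : (B * B).trace ≤ (B * (a • J)).trace := psd_trace_mono' hBpsd hBle
  have t3 : (B * (a • J)).trace = a * (A * (J * J)).trace := by
    rw [Matrix.mul_smul, Matrix.trace_smul, smul_eq_mul]
    congr 1
    have hBJ : B * J = S * (A * (J * S)) := by rw [hB, ← hSS]; noncomm_ring
    have h5 : A * (J * S) * S = A * (J * J) := by rw [← hSS]; noncomm_ring
    rw [hBJ, Matrix.trace_mul_comm S (A * (J * S)), h5]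
  have t4 : (A * (J * J)).trace ≤ lam'⁻¹ * (A * J).trace := by
    have := psd_trace_mono' hA hJJle
    rwa [Matrix.mul_smul, Matrix.trace_smul, smul_eq_mul] at this
  calc (A * J * A * J).trace = (B * B).trace := t1
    _ ≤ (B * (a • J)).trace := t2
    _ = a * (A * (J * J)).trace := t3
    _ ≤ a * (lam'⁻¹ * (A * J).trace) := mul_le_mul_of_nonneg_left t4 ha0
    _ = (a / lam') * (A * J).trace := by field_simp
end

section
/- Let Σ1, Σ2 be symmetric PSD matrices and λ > 0 with (1/c)(Σ2 + λI) ⪯ Σ1 + λI for some c ≥ 1. Then for any PSD matrix Σ, ‖(Σ1 + λI)^{-1/2} Σ (Σ1 + λI)^{-1/2}‖_op ≤ c·‖Σ^{1/2}(Σ2 + λI)^{-1}Σ^{1/2}‖_op. -/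
section OldSqrt

open scoped ComplexOrder

/-- The old Mathlib `Matrix.PosSemidef.sqrt` (removed upstream), with its original definition. -/
noncomputable def Matrix.PosSemidef.sqrt {n 𝕜 : Type*} [Fintype n] [RCLike 𝕜] [DecidableEq n]
    {A : Matrix n n 𝕜} (hA : A.PosSemidef) : Matrix n n 𝕜 :=
  hA.1.eigenvectorUnitary.1 * Matrix.diagonal ((↑) ∘ Real.sqrt ∘ hA.1.eigenvalues) *
    (star hA.1.eigenvectorUnitary : Matrix n n 𝕜)

lemma Matrix.PosSemidef.posSemidef_sqrt {n 𝕜 : Type*} [Fintype n] [RCLike 𝕜] [DecidableEq n]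
    {A : Matrix n n 𝕜} (hA : A.PosSemidef) : hA.sqrt.PosSemidef := by
  unfold Matrix.PosSemidef.sqrt
  have := Matrix.PosSemidef.mul_mul_conjTranspose_same
    (Matrix.posSemidef_diagonal_iff.mpr (fun i => ?_) :
      (Matrix.diagonal ((↑) ∘ Real.sqrt ∘ hA.1.eigenvalues : n → 𝕜)).PosSemidef)
    (hA.1.eigenvectorUnitary : Matrix n n 𝕜)
  · simpa [Matrix.star_eq_conjTranspose] using this
  · rw [Function.comp_apply, RCLike.nonneg_iff]
    constructor
    · simp only [Function.comp_apply, RCLike.ofReal_re]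
      exact Real.sqrt_nonneg _
    · simp only [Function.comp_apply, RCLike.ofReal_im]

lemma Matrix.PosSemidef.sqrt_mul_self {n 𝕜 : Type*} [Fintype n] [RCLike 𝕜] [DecidableEq n]
    {A : Matrix n n 𝕜} (hA : A.PosSemidef) : hA.sqrt * hA.sqrt = A := by
  set C : Matrix n n 𝕜 := hA.1.eigenvectorUnitary.1 with hCdef
  have hC : (star hA.1.eigenvectorUnitary : Matrix n n 𝕜) * C = 1 := by simp [C]
  conv_rhs => rw [hA.1.spectral_theorem, Unitary.conjStarAlgAut_apply]
  unfold Matrix.PosSemidef.sqrt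
  calc _ = C * (Matrix.diagonal ((↑) ∘ Real.sqrt ∘ hA.1.eigenvalues)
        * ((star hA.1.eigenvectorUnitary : Matrix n n 𝕜) * C)
        * Matrix.diagonal ((↑) ∘ Real.sqrt ∘ hA.1.eigenvalues))
        * (star hA.1.eigenvectorUnitary : Matrix n n 𝕜) := by simp only [mul_assoc]; rfl
    _ = _ := by
      rw [hC, mul_one, Matrix.diagonal_mul_diagonal]
      congr 3
      funext i
      simp only [Function.comp_apply, ← RCLike.ofReal_mul,
        Real.mul_self_sqrt (hA.eigenvalues_nonneg i)]

end OldSqrt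

open scoped InnerProductSpace

lemma aux_cs {E : Type*} [NormedAddCommGroup E] [InnerProductSpace ℝ E] [CompleteSpace E]
    {T : E →L[ℝ] E} (hT : T.IsPositive) (x y : E) :
    ⟪T x, y⟫_ℝ ^ 2 ≤ ⟪T x, x⟫_ℝ * ⟪T y, y⟫_ℝ := by
  have hsymm : ∀ u v : E, ⟪T u, v⟫_ℝ = ⟪T v, u⟫_ℝ := fun u v => by
    have h := hT.1 u v
    simp only [ContinuousLinearMap.coe_coe] at h
    rw [h, real_inner_comm]
  let core : PreInnerProductSpace.Core ℝ E :=
  { inner := fun u v => ⟪T u, v⟫_ℝ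
    conj_inner_symm := fun u v => by simpa using hsymm v u
    re_inner_nonneg := fun u => hT.2 u
    add_left := fun u v w => by simp [inner_add_left]
    smul_left := fun u v r => by simp [inner_smul_left] }
  have h := @InnerProductSpace.Core.inner_mul_inner_self_le ℝ E _ _ _ core x y
  calc ⟪T x, y⟫_ℝ ^ 2 = ‖⟪T x, y⟫_ℝ‖ * ‖⟪T y, x⟫_ℝ‖ := by
        rw [hsymm y x, Real.norm_eq_abs, ← abs_mul, ← sq]
        exact (abs_of_nonneg (sq_nonneg _)).symm
    _ ≤ _ := h

lemma aux_norm_le {E : Type*} [NormedAddCommGroup E] [InnerProductSpace ℝ E] [CompleteSpace E]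
    {T : E →L[ℝ] E} (hT : T.IsPositive) {c : ℝ} (hc : 0 ≤ c)
    (h : ∀ x, ⟪T x, x⟫_ℝ ≤ c * ‖x‖ ^ 2) : ‖T‖ ≤ c := by
  refine T.opNorm_le_bound hc fun x => ?_
  have h1 := aux_cs hT x (T x)
  have h2 : ⟪T x, T x⟫_ℝ = ‖T x‖ ^ 2 := real_inner_self_eq_norm_sq _
  have h3 : 0 ≤ ⟪T x, x⟫_ℝ := hT.2 x
  have h4 : 0 ≤ ⟪T (T x), T x⟫_ℝ := hT.2 (T x)
  have h7 : ⟪T x, x⟫_ℝ * ⟪T (T x), T x⟫_ℝ ≤ (c * ‖x‖ ^ 2) * (c * ‖T x‖ ^ 2) :=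
    mul_le_mul (h x) (h (T x)) h4 (by positivity)
  have h8 : (‖T x‖ ^ 2) ^ 2 ≤ (c * ‖x‖ ^ 2) * (c * ‖T x‖ ^ 2) := by
    calc (‖T x‖ ^ 2) ^ 2 = ⟪T x, T x⟫_ℝ ^ 2 := by rw [h2]
      _ ≤ _ := le_trans h1 h7
  rcases eq_or_lt_of_le (norm_nonneg (T x)) with h0 | h0
  · rw [← h0]; positivity
  · have h9 : ‖T x‖ ^ 2 ≤ (c * ‖x‖) ^ 2 := by
      refine le_of_mul_le_mul_right ?_ (pow_pos h0 2)
      nlinarith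
    exact (pow_le_pow_iff_left₀ (norm_nonneg _) (mul_nonneg hc (norm_nonneg x)) two_ne_zero).mp h9

lemma aux_norm_shift {E : Type*} [NormedAddCommGroup E] [InnerProductSpace ℝ E]
    [CompleteSpace E] (t : E →L[ℝ] E) : ‖star t * t‖ = ‖t * star t‖ :=
  CStarRing.norm_star_mul_self.trans CStarRing.norm_self_mul_star.symm

lemma psd_isPositive {d : ℕ} {M : Matrix (Fin d) (Fin d) ℝ} (hM : M.PosSemidef) :
    (Matrix.toEuclideanCLM (𝕜 := ℝ) M).IsPositive := by
  constructor
  · rw [← ContinuousLinearMap.isSelfAdjoint_iff_isSymmetric, IsSelfAdjoint, ← map_star]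
    exact congrArg _ hM.isHermitian
  · intro x
    have : (Matrix.toEuclideanCLM (𝕜 := ℝ) M).reApplyInnerSelf x
        = ⟪x, Matrix.toEuclideanCLM (𝕜 := ℝ) M x⟫_ℝ := by
      rw [ContinuousLinearMap.reApplyInnerSelf, real_inner_comm]
      rfl
    rw [this, EuclideanSpace.inner_eq_star_dotProduct]
    rw [Matrix.ofLp_toEuclideanCLM, dotProduct_comm]
    exact hM.dotProduct_mulVec_nonneg _

set_option maxHeartbeats 1000000

/-- `R` is the PSD square root of `(Σ1 + λI)⁻¹`. -/
theorem stmt13 {d : ℕ} (S S1 S2 R : Matrix (Fin d) (Fin d) ℝ) (lam c : ℝ)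
    (hS : S.PosSemidef) (hS1 : S1.PosSemidef) (hS2 : S2.PosSemidef)
    (hlam : 0 < lam) (hc : 1 ≤ c)
    (hord : ((S1 + lam • (1 : Matrix (Fin d) (Fin d) ℝ))
        - c⁻¹ • (S2 + lam • (1 : Matrix (Fin d) (Fin d) ℝ))).PosSemidef)
    (hR : R.PosSemidef)
    (hRR : R * R = (S1 + lam • (1 : Matrix (Fin d) (Fin d) ℝ))⁻¹) :
    ‖Matrix.toEuclideanCLM (𝕜 := ℝ) (R * S * R)‖
      ≤ c * ‖Matrix.toEuclideanCLM (𝕜 := ℝ)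
          (hS.sqrt * (S2 + lam • (1 : Matrix (Fin d) (Fin d) ℝ))⁻¹ * hS.sqrt)‖ := by
  classical
  have hcpos : (0 : ℝ) < c := lt_of_lt_of_le one_pos hc
  set M1 : Matrix (Fin d) (Fin d) ℝ := S1 + lam • 1 with hM1def
  set M2 : Matrix (Fin d) (Fin d) ℝ := S2 + lam • 1 with hM2def
  have hlamI : (lam • (1 : Matrix (Fin d) (Fin d) ℝ)).PosDef := by
    rw [Matrix.smul_one_eq_diagonal]
    exact Matrix.posDef_diagonal_iff.mpr fun i => hlam
  have hA : M1.PosDef := Matrix.PosDef.posSemidef_add hS1 hlamI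
  have hB : M2.PosDef := Matrix.PosDef.posSemidef_add hS2 hlamI
  have hAdet : IsUnit M1.det := isUnit_iff_ne_zero.mpr hA.det_pos.ne'
  have hBdet : IsUnit M2.det := isUnit_iff_ne_zero.mpr hB.det_pos.ne'
  set φ := (Matrix.toEuclideanCLM (𝕜 := ℝ) (n := Fin d)) with hφ
  set r := φ R with hr
  set q := φ hS.sqrt with hq
  set a := φ M1 with ha
  set b := φ M2 with hb
  set ai := φ M1⁻¹ with hai
  set bi := φ M2⁻¹ with hbi
  have hrr : r * r = ai := by rw [hr, hai, ← map_mul]; exact congrArg φ hRR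
  have ha_ai : a * ai = 1 := by
    rw [ha, hai, ← map_mul, Matrix.mul_nonsing_inv _ hAdet, map_one]
  have hai_a : ai * a = 1 := by
    rw [ha, hai, ← map_mul, Matrix.nonsing_inv_mul _ hAdet, map_one]
  have hb_bi : b * bi = 1 := by
    rw [hb, hbi, ← map_mul, Matrix.mul_nonsing_inv _ hBdet, map_one]
  -- commutation gives r * a * r = 1
  have hcomm : r * ai = ai * r := by rw [← hrr, mul_assoc]
  have hra : a * r = r * a := by
    calc a * r = a * r * (ai * a) := by rw [hai_a, mul_one]
      _ = a * (r * ai) * a := by simp only [mul_assoc]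
      _ = a * (ai * r) * a := by rw [hcomm]
      _ = (a * ai) * (r * a) := by simp only [mul_assoc]
      _ = r * a := by rw [ha_ai, one_mul]
  have hrar : r * a * r = 1 := by
    calc r * a * r = r * (a * r) := by rw [mul_assoc]
      _ = r * (r * a) := by rw [hra]
      _ = (r * r) * a := by rw [mul_assoc]
      _ = 1 := by rw [hrr, hai_a]
  -- inner product facts
  have hinner : ∀ (M : Matrix (Fin d) (Fin d) ℝ) (hM : M.PosSemidef)
      (x : EuclideanSpace ℝ (Fin d)), 0 ≤ ⟪φ M x, x⟫_ℝ := fun M hM x =>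
    (psd_isPositive hM).2 x
  have hsymmq : ∀ u v : EuclideanSpace ℝ (Fin d), ⟪q u, v⟫_ℝ = ⟪u, q v⟫_ℝ := by
    have hq_sa : IsSelfAdjoint q := by
      rw [hq, IsSelfAdjoint, ← map_star]
      exact congrArg _ hS.posSemidef_sqrt.isHermitian
    intro u v
    have h := (ContinuousLinearMap.isSelfAdjoint_iff_isSymmetric.mp hq_sa) u v
    simpa using h
  -- the order hypothesis, in inner product form
  have hord' : ∀ x : EuclideanSpace ℝ (Fin d), ⟪b x, x⟫_ℝ ≤ c * ⟪a x, x⟫_ℝ := by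
    intro x
    have h0 := hinner _ hord x
    rw [map_sub, map_smul] at h0
    simp only [ContinuousLinearMap.sub_apply, ContinuousLinearMap.smul_apply,
      inner_sub_left, inner_smul_left, RCLike.conj_to_real] at h0
    rw [← ha, ← hb] at h0
    have : c⁻¹ * ⟪b x, x⟫_ℝ ≤ ⟪a x, x⟫_ℝ := by linarith
    calc ⟪b x, x⟫_ℝ = c * (c⁻¹ * ⟪b x, x⟫_ℝ) := by
          field_simp
      _ ≤ c * ⟪a x, x⟫_ℝ := by
          exact mul_le_mul_of_nonneg_left this hcpos.le
  -- key inequality: ⟪ai u, u⟫ ≤ c * ⟪bi u, u⟫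
  have hkey : ∀ u : EuclideanSpace ℝ (Fin d), ⟪ai u, u⟫_ℝ ≤ c * ⟪bi u, u⟫_ℝ := by
    intro u
    set w := ai u with hw
    set z := bi u with hz
    have hu1 : a w = u := by
      rw [hw, ← ContinuousLinearMap.mul_apply, ha_ai, ContinuousLinearMap.one_apply]
    have hu2 : b z = u := by
      rw [hz, ← ContinuousLinearMap.mul_apply, hb_bi, ContinuousLinearMap.one_apply]
    have hcs := aux_cs (psd_isPositive hB.posSemidef) z w
    rw [← hb, hu2] at hcs
    have hbw : ⟪b w, w⟫_ℝ ≤ c * ⟪u, w⟫_ℝ := by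
      have := hord' w
      rwa [hu1] at this
    have hw0 : 0 ≤ ⟪u, w⟫_ℝ := by
      rw [real_inner_comm, hw]
      exact hinner _ hA.posSemidef.inv u
    have hz0 : 0 ≤ ⟪u, z⟫_ℝ := by
      rw [real_inner_comm, hz]
      exact hinner _ hB.posSemidef.inv u
    have hbww : 0 ≤ ⟪b w, w⟫_ℝ := hinner _ hB.posSemidef w
    have hmain : ⟪u, w⟫_ℝ ^ 2 ≤ ⟪u, z⟫_ℝ * (c * ⟪u, w⟫_ℝ) :=
      le_trans hcs (mul_le_mul_of_nonneg_left hbw hz0)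
    have : ⟪u, w⟫_ℝ ≤ c * ⟪u, z⟫_ℝ := by
      rcases eq_or_lt_of_le hw0 with h0 | h0
      · rw [← h0]; positivity
      · have : ⟪u, w⟫_ℝ * ⟪u, w⟫_ℝ ≤ (c * ⟪u, z⟫_ℝ) * ⟪u, w⟫_ℝ := by nlinarith
        exact le_of_mul_le_mul_right this h0
    calc ⟪ai u, u⟫_ℝ = ⟪u, w⟫_ℝ := real_inner_comm _ _
      _ ≤ c * ⟪u, z⟫_ℝ := this
      _ = c * ⟪bi u, u⟫_ℝ := by rw [real_inner_comm]
  -- rewrite both sides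
  have hLHS : ‖φ (R * S * R)‖ = ‖q * ai * q‖ := by
    have hq_sa : IsSelfAdjoint q := by
      rw [hq, IsSelfAdjoint, ← map_star]
      exact congrArg _ hS.posSemidef_sqrt.isHermitian
    have hr_sa : IsSelfAdjoint r := by
      rw [hr, IsSelfAdjoint, ← map_star]
      exact congrArg _ hR.isHermitian
    have hqq : q * q = φ S := by rw [hq, ← map_mul]; exact congrArg φ hS.sqrt_mul_self
    have h1 : φ (R * S * R) = star (q * r) * (q * r) := by
      rw [star_mul, hr_sa.star_eq, hq_sa.star_eq]
      rw [map_mul, map_mul, ← hr, ← hqq]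
      simp only [mul_assoc]
    have h2 : (q * r) * star (q * r) = q * ai * q := by
      rw [star_mul, hr_sa.star_eq, hq_sa.star_eq, ← hrr]
      simp only [mul_assoc]
    rw [h1, aux_norm_shift, h2]
  have hRHS : φ (hS.sqrt * M2⁻¹ * hS.sqrt) = q * bi * q := by
    rw [map_mul, map_mul, ← hq, ← hbi]
  rw [hLHS, hRHS]
  -- final bound
  have hWpsd : (hS.sqrt * M2⁻¹ * hS.sqrt).PosSemidef := by
    have := hB.posSemidef.inv.mul_mul_conjTranspose_same hS.sqrt
    rwa [hS.posSemidef_sqrt.isHermitian.eq] at this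
  have hTpsd : (hS.sqrt * M1⁻¹ * hS.sqrt).PosSemidef := by
    have := hA.posSemidef.inv.mul_mul_conjTranspose_same hS.sqrt
    rwa [hS.posSemidef_sqrt.isHermitian.eq] at this
  have hTpos : (q * ai * q).IsPositive := by
    have := psd_isPositive hTpsd
    rwa [map_mul, map_mul] at this
  refine aux_norm_le hTpos (mul_nonneg hcpos.le (norm_nonneg _)) fun x => ?_
  have e1 : ⟪(q * ai * q) x, x⟫_ℝ = ⟪ai (q x), q x⟫_ℝ := by
    rw [ContinuousLinearMap.mul_apply, ContinuousLinearMap.mul_apply, hsymmq]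
  have e2 : ⟪(q * bi * q) x, x⟫_ℝ = ⟪bi (q x), q x⟫_ℝ := by
    rw [ContinuousLinearMap.mul_apply, ContinuousLinearMap.mul_apply, hsymmq]
  calc ⟪(q * ai * q) x, x⟫_ℝ = ⟪ai (q x), q x⟫_ℝ := e1
    _ ≤ c * ⟪bi (q x), q x⟫_ℝ := hkey (q x)
    _ = c * ⟪(q * bi * q) x, x⟫_ℝ := by rw [e2]
    _ ≤ c * (‖(q * bi * q) x‖ * ‖x‖) :=
        mul_le_mul_of_nonneg_left (real_inner_le_norm _ _) hcpos.le
    _ ≤ c * (‖q * bi * q‖ * ‖x‖ * ‖x‖) := by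
        refine mul_le_mul_of_nonneg_left ?_ hcpos.le
        exact mul_le_mul_of_nonneg_right ((q * bi * q).le_opNorm x) (norm_nonneg x)
    _ = c * ‖q * bi * q‖ * ‖x‖ ^ 2 := by ring
end
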